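/- Let g ∈ L¹(ℝ^N) be nonnegative with ∫_{ℝ^N} log(1 + |y|) g(y) dy < +∞. Then the function φ(x) = ∫_{ℝ^N} log(1/|x - y|) g(y) dy satisfies ∫_{ℝ^N} |φ(x)| / (1 + |x|^{N+2γ}) dx < +∞ for every γ > 0. -/

import Mathlib

/-!
Split the kernel as `|log |x - y|| ≤ log (1 + |x|) + log (1 + |y|) + K (x - y)` with
`K z = log⁺ |z|⁻¹`. Against `g` the first two terms give `log (1 + |x|) ‖g‖₁` and the constant
`∫ log (1 + |y|) |g y| dy`; both are integrable against the weight
`(1 + |x| ^ a)⁻¹ ≲ (1 + |x|) ^ (-a)` for `a > N`, since `log (1 + |x|)` costs only a power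
`(1 + |x|) ^ ε`. The kernel `K` vanishes off the unit ball and is `≤ 2 |z| ^ (-1/2)`, hence
integrable, so `|g| ⋆ K` is integrable, and the weight is at most `1`.
-/

open Real MeasureTheory
open scoped Convolution

lemma Real.one_add_rpow_le_two_rpow_mul {t p : ℝ} (ht : 0 ≤ t) (hp : 0 ≤ p) :
    (1 + t) ^ p ≤ 2 ^ p * (1 + t ^ p) := calc
  (1 + t) ^ p ≤ (2 * max 1 t) ^ p := by
    gcongr; linarith [le_max_left 1 t, le_max_right 1 t]
  _ = 2 ^ p * max 1 (t ^ p) := by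
    rw [mul_rpow zero_le_two (by positivity), rpow_max zero_le_one ht hp, one_rpow]
  _ ≤ 2 ^ p * (1 + t ^ p) := by
    gcongr; exact max_le_add_of_nonneg zero_le_one (by positivity)

lemma Real.abs_log_le_log_one_add_add_posLog_inv {r : ℝ} (hr : 0 ≤ r) :
    |log r| ≤ log (1 + r) + log⁺ r⁻¹ := by
  have h_pos : log⁺ r ≤ log (1 + r) := by
    rw [posLog_eq_log_max_one hr]
    exact log_le_log (by positivity) (max_le (by linarith) (by linarith))
  rw [abs_le]
  constructor
  · have : log r⁻¹ ≤ log⁺ r⁻¹ := le_max_right _ _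
    linarith [log_inv r, log_nonneg (by linarith : (1:ℝ) ≤ 1 + r)]
  · have : log r ≤ log⁺ r := le_max_right _ _
    linarith [posLog_nonneg (x := r⁻¹)]

lemma Real.posLog_le_rpow_div {x ε : ℝ} (hx : 0 ≤ x) (hε : 0 < ε) : log⁺ x ≤ x ^ ε / ε :=
  max_le (by positivity) (log_le_rpow_div hx hε)

lemma log_one_add_norm_sub_le {E : Type*} [SeminormedAddCommGroup E] (x y : E) :
    log (1 + ‖x - y‖) ≤ log (1 + ‖x‖) + log (1 + ‖y‖) := by
  rw [← log_mul (by positivity) (by positivity)]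
  gcongr
  nlinarith [norm_sub_le x y, norm_nonneg x, norm_nonneg y]

lemma abs_log_one_div_norm_sub_le {E : Type*} [SeminormedAddCommGroup E] (x y : E) :
    |log (1 / ‖x - y‖)| ≤ log (1 + ‖x‖) + log (1 + ‖y‖) + log⁺ ‖x - y‖⁻¹ := by
  rw [one_div, log_inv, abs_neg]
  linarith [abs_log_le_log_one_add_add_posLog_inv (norm_nonneg (x - y)),
    log_one_add_norm_sub_le x y]

lemma abs_integral_log_one_div_norm_sub_mul_le {E : Type*} [NormedAddCommGroup E]
    [MeasurableSpace E] {μ : Measure E} {g : E → ℝ} (hg : Integrable g μ)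
    (hlog : Integrable (fun y => log (1 + ‖y‖) * g y) μ) {x : E}
    (hx : ConvolutionExistsAt (fun y => ‖g y‖) (fun z => log⁺ ‖z‖⁻¹) x
      (ContinuousLinearMap.mul ℝ ℝ) μ) :
    |∫ y, log (1 / ‖x - y‖) * g y ∂μ| ≤ log (1 + ‖x‖) * ∫ y, ‖g y‖ ∂μ
      + ∫ y, ‖log (1 + ‖y‖) * g y‖ ∂μ
      + ((fun y => ‖g y‖) ⋆[ContinuousLinearMap.mul ℝ ℝ, μ] (fun z => log⁺ ‖z‖⁻¹)) x := by
  have h_int : Integrable (fun y => log (1 + ‖x‖) * ‖g y‖ + ‖log (1 + ‖y‖) * g y‖) μ :=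
    (hg.norm.const_mul _).add hlog.norm
  have h_conv : Integrable (fun y => ‖g y‖ * log⁺ ‖x - y‖⁻¹) μ := hx
  have h_bound : ∀ y, ‖log (1 / ‖x - y‖) * g y‖
      ≤ log (1 + ‖x‖) * ‖g y‖ + ‖log (1 + ‖y‖) * g y‖ + ‖g y‖ * log⁺ ‖x - y‖⁻¹ := by
    intro y
    rw [norm_mul, norm_mul, norm_eq_abs (log (1 / _)),
      norm_of_nonneg (log_nonneg (by simp) : 0 ≤ log (1 + ‖y‖))]
    calc |log (1 / ‖x - y‖)| * ‖g y‖
        ≤ (log (1 + ‖x‖) + log (1 + ‖y‖) + log⁺ ‖x - y‖⁻¹) * ‖g y‖ := by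
          gcongr; exact abs_log_one_div_norm_sub_le x y
      _ = _ := by ring
  calc |∫ y, log (1 / ‖x - y‖) * g y ∂μ|
      ≤ ∫ y, log (1 + ‖x‖) * ‖g y‖ + ‖log (1 + ‖y‖) * g y‖ + ‖g y‖ * log⁺ ‖x - y‖⁻¹ ∂μ :=
        norm_integral_le_of_norm_le (h_int.add h_conv) (ae_of_all _ h_bound)
    _ = _ := by
        rw [integral_add h_int h_conv, integral_add (hg.norm.const_mul _) hlog.norm,
          integral_const_mul]
        rfl

section Haar

variable {E : Type*} [NormedAddCommGroup E] [NormedSpace ℝ E] [FiniteDimensional ℝ E]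
  [MeasurableSpace E] [BorelSpace E] {μ : Measure E} [μ.IsAddHaarMeasure]

open Module

lemma integrable_posLog_inv_norm (hd : 1 ≤ finrank ℝ E) :
    Integrable (fun z : E => log⁺ ‖z‖⁻¹) μ := by
  have h_loc : LocallyIntegrable (fun z : E => log⁺ ‖z‖⁻¹) μ := by
    have hd' : (1 : ℝ) ≤ finrank ℝ E := by exact_mod_cast hd
    refine locallyIntegrable_of_norm_le_rpow hd (C := 2) (α := 1 / 2)
      (by linarith) (ae_of_all _ fun z => ?_) (by fun_prop)
    rw [norm_of_nonneg posLog_nonneg, rpow_neg (norm_nonneg z), ← inv_rpow (norm_nonneg z)]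
    linarith [posLog_le_rpow_div (inv_nonneg.2 (norm_nonneg z)) one_half_pos]
  refine (h_loc.integrableOn_isCompact (isCompact_closedBall 0 1))
    |>.integrable_of_forall_notMem_eq_zero fun z hz => ?_
  rw [Metric.mem_closedBall, dist_zero_right, not_le] at hz
  rw [posLog_eq_zero_iff, abs_of_nonneg (by positivity)]
  exact inv_le_one_of_one_le₀ hz.le

lemma integrable_one_add_norm_rpow_div_one_add_rpow {s a : ℝ} (hs : 0 ≤ s)
    (ha : finrank ℝ E + s < a) :
    Integrable (fun x : E => (1 + ‖x‖) ^ s / (1 + ‖x‖ ^ a)) μ := by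
  have ha0 : 0 ≤ a := by linarith [(finrank ℝ E).cast_nonneg (α := ℝ)]
  refine ((integrable_one_add_norm (μ := μ) (r := a - s) (by linarith)).const_mul (2 ^ a)).mono'
    (Measurable.aestronglyMeasurable (by fun_prop)) (ae_of_all _ fun x => ?_)
  have h1 : 0 < 1 + ‖x‖ := by positivity
  rw [norm_of_nonneg (by positivity), div_le_iff₀ (by positivity)]
  calc (1 + ‖x‖) ^ s = (1 + ‖x‖) ^ (-(a - s)) * (1 + ‖x‖) ^ a := by
        rw [← rpow_add h1]; ring_nf
    _ ≤ (1 + ‖x‖) ^ (-(a - s)) * (2 ^ a * (1 + ‖x‖ ^ a)) := by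
        gcongr; exact one_add_rpow_le_two_rpow_mul (norm_nonneg x) ha0
    _ = _ := by ring

lemma integrable_log_one_add_norm_div_one_add_rpow {a : ℝ} (ha : finrank ℝ E < a) :
    Integrable (fun x : E => log (1 + ‖x‖) / (1 + ‖x‖ ^ a)) μ := by
  set ε := (a - finrank ℝ E) / 2
  have hε : 0 < ε := by simp only [ε]; linarith
  have hεa : finrank ℝ E + ε < a := by simp only [ε]; linarith
  refine ((integrable_one_add_norm_rpow_div_one_add_rpow (μ := μ) hε.le hεa).const_mul ε⁻¹).mono'
    (Measurable.aestronglyMeasurable (by fun_prop)) (ae_of_all _ fun x => ?_)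
  have h_log : 0 ≤ log (1 + ‖x‖) := log_nonneg (by simp)
  rw [norm_of_nonneg (by positivity), ← mul_div_assoc, inv_mul_eq_div]
  exact div_le_div_of_nonneg_right (log_le_rpow_div (by positivity) hε) (by positivity)

theorem integrable_integral_log_one_div_norm_sub_mul_div_one_add_rpow
    (hd : 1 ≤ finrank ℝ E) {g : E → ℝ} (hg : Integrable g μ)
    (hlog : Integrable (fun y => log (1 + ‖y‖) * g y) μ) {a : ℝ} (ha : finrank ℝ E < a) :
    Integrable (fun x => (∫ y, log (1 / ‖x - y‖) * g y ∂μ) / (1 + ‖x‖ ^ a)) μ := by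
  set K : E → ℝ := fun z => log⁺ ‖z‖⁻¹
  set G : E → ℝ := fun y => ‖g y‖
  have hK : Integrable K μ := integrable_posLog_inv_norm hd
  have h_weight : Integrable (fun x : E => (1 + ‖x‖ ^ a)⁻¹) μ := by
    simpa using integrable_one_add_norm_rpow_div_one_add_rpow (μ := μ) le_rfl
      (by simpa using ha)
  have h_weight_le : ∀ x : E, ‖(1 + ‖x‖ ^ a)⁻¹‖ ≤ 1 := fun x => by
    rw [norm_inv, norm_of_nonneg (by positivity)]
    exact inv_le_one_of_one_le₀ (le_add_of_nonneg_right (by positivity))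
  have h_majorant : Integrable (fun x => log (1 + ‖x‖) / (1 + ‖x‖ ^ a) * ∫ y, G y ∂μ
      + ((∫ y, ‖log (1 + ‖y‖) * g y‖ ∂μ) * (1 + ‖x‖ ^ a)⁻¹
        + (G ⋆[ContinuousLinearMap.mul ℝ ℝ, μ] K) x * (1 + ‖x‖ ^ a)⁻¹)) μ :=
    ((integrable_log_one_add_norm_div_one_add_rpow ha).mul_const _).add
      ((h_weight.const_mul _).add ((hg.norm.integrable_convolution _ hK).mul_bdd
        (Measurable.aestronglyMeasurable (by fun_prop)) (ae_of_all _ h_weight_le)))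
  have h_meas : AEStronglyMeasurable (fun x => ∫ y, log (1 / ‖x - y‖) * g y ∂μ) μ := by
    have h_kernel : Measurable fun p : E × E => log (1 / ‖p.1 - p.2‖) := by fun_prop
    exact AEStronglyMeasurable.integral_prod_right'
      (f := fun p : E × E => log (1 / ‖p.1 - p.2‖) * g p.2)
      (h_kernel.aestronglyMeasurable.mul hg.aestronglyMeasurable.comp_snd)
  refine h_majorant.mono' (h_meas.aemeasurable.div (by fun_prop)).aestronglyMeasurable ?_
  filter_upwards [hg.norm.ae_convolution_exists (ContinuousLinearMap.mul ℝ ℝ) hK] with x hx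
  have hD : 0 < 1 + ‖x‖ ^ a := by positivity
  rw [norm_div, norm_of_nonneg hD.le]
  calc ‖∫ y, log (1 / ‖x - y‖) * g y ∂μ‖ / (1 + ‖x‖ ^ a)
      ≤ (log (1 + ‖x‖) * ∫ y, G y ∂μ + ∫ y, ‖log (1 + ‖y‖) * g y‖ ∂μ
          + (G ⋆[ContinuousLinearMap.mul ℝ ℝ, μ] K) x) / (1 + ‖x‖ ^ a) :=
        div_le_div_of_nonneg_right (abs_integral_log_one_div_norm_sub_mul_le hg hlog hx) hD.le
    _ = _ := by ring

end Haar

theorem stmt_14_general (N : ℕ) (hN : 1 ≤ N)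
    (g : EuclideanSpace ℝ (Fin N) → ℝ) (hg : Integrable g)
    (hlog : Integrable (fun y => Real.log (1 + ‖y‖) * g y))
    (φ : EuclideanSpace ℝ (Fin N) → ℝ)
    (hφ : ∀ x, φ x = ∫ y, Real.log (1 / ‖x - y‖) * g y) :
    ∀ γ : ℝ, 0 < γ →
      Integrable (fun x => |φ x| / (1 + ‖x‖ ^ ((N : ℝ) + 2 * γ))) := by
  intro γ hγ
  have h := integrable_integral_log_one_div_norm_sub_mul_div_one_add_rpow (μ := volume)
    (by rwa [finrank_euclideanSpace_fin]) hg hlog (a := N + 2 * γ)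
    (by rw [finrank_euclideanSpace_fin]; linarith)
  refine h.abs.congr (ae_of_all _ fun x => ?_)
  simp only [hφ, abs_div, abs_of_pos (by positivity : (0 : ℝ) < 1 + ‖x‖ ^ ((N : ℝ) + 2 * γ))]

theorem stmt_14 (N : ℕ) (hN : 1 ≤ N)
    (g : EuclideanSpace ℝ (Fin N) → ℝ) (hg : Integrable g)
    (hgnonneg : ∀ y, 0 ≤ g y)
    (hlog : Integrable (fun y => Real.log (1 + ‖y‖) * g y))
    (φ : EuclideanSpace ℝ (Fin N) → ℝ)
    (hφ : ∀ x, φ x = ∫ y, Real.log (1 / ‖x - y‖) * g y) :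
    ∀ γ : ℝ, 0 < γ →
      Integrable (fun x => |φ x| / (1 + ‖x‖ ^ ((N : ℝ) + 2 * γ))) :=
  stmt_14_general N hN g hg hlog φ hφ
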